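/- Let (Y, 𝒴) be a measurable space, r : Y → ℝ a measurable reward with 0 ≤ r(y) ≤ 1 for all y, 0 < ε ≤ 3/4, and let π, π_k, α be probability measures on Y. Then the upper bound L_α(π) − (J(π) − J(π_k)) ≤ 2·((1 − σ_{α,ε})/σ_{α,ε})·TV(π, α) + 2·TV(π_k, α) holds. -/

import Mathlib

open MeasureTheory

/-- Expected reward `J(m) = ∫ r dm`. -/
noncomputable def J {Y : Type*} [MeasurableSpace Y] (r : Y → ℝ) (m : Measure Y) : ℝ :=
  ∫ y, r y ∂m

/-- Variance `σ_m² = ∫ (r − μ_m)² dm` with `μ_m = J(m)`. -/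
noncomputable def rvar {Y : Type*} [MeasurableSpace Y] (r : Y → ℝ) (m : Measure Y) : ℝ :=
  ∫ y, (r y - J r m) ^ 2 ∂m

/-- Regularized standard deviation `σ_{m,ε} = sqrt(σ_m² + ε)`. -/
noncomputable def sigmaEps {Y : Type*} [MeasurableSpace Y] (r : Y → ℝ) (m : Measure Y)
    (ε : ℝ) : ℝ :=
  Real.sqrt (rvar r m + ε)

/-- Off-policy advantage objective `L_α(π) = (J(π) − μ_α)/σ_{α,ε}`. -/
noncomputable def Ladv {Y : Type*} [MeasurableSpace Y] (r : Y → ℝ) (α π : Measure Y)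
    (ε : ℝ) : ℝ :=
  (J r π - J r α) / sigmaEps r α ε

/-- Total variation distance `TV(m₁,m₂) = sup_{A measurable} |m₁(A) − m₂(A)|`. -/
noncomputable def tvDist {Y : Type*} [MeasurableSpace Y] (m₁ m₂ : Measure Y) : ℝ :=
  ⨆ A : {s : Set Y // MeasurableSet s}, |(m₁ A.1).toReal - (m₂ A.1).toReal|

/-!
Writing `σ = σ_{α,ε}`, the gap equals `((1 - σ)/σ)(J(π) - J(α)) + (J(πk) - J(α))`.
Popoviciu's inequality gives `Var_α(r) ≤ 1/4`, so `σ ≤ 1` and the coefficient `(1 - σ)/σ` is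
nonnegative; each difference of expected rewards is bounded by the corresponding total variation
distance through the layer-cake formula `J(m) = ∫₀¹ m {t ≤ r} dt`.
-/

section TotalVariation

variable {Y : Type*} [MeasurableSpace Y] (m₁ m₂ : Measure Y) [IsFiniteMeasure m₁]
  [IsFiniteMeasure m₂]

lemma bddAbove_range_abs_measureReal_sub :
    BddAbove (Set.range fun A : {s : Set Y // MeasurableSet s} =>
      |(m₁ A.1).toReal - (m₂ A.1).toReal|) := by
  refine ⟨m₁.real Set.univ + m₂.real Set.univ, ?_⟩
  rintro _ ⟨A, rfl⟩
  simp only [← measureReal_def]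
  have h₁ := measureReal_mono (μ := m₁) (Set.subset_univ A.1)
  have h₂ := measureReal_mono (μ := m₂) (Set.subset_univ A.1)
  rw [abs_le]
  constructor <;> linarith [measureReal_nonneg (μ := m₁) (s := A.1),
    measureReal_nonneg (μ := m₂) (s := A.1)]

lemma tvDist_nonneg : 0 ≤ tvDist m₁ m₂ :=
  (abs_nonneg _).trans (le_ciSup (bddAbove_range_abs_measureReal_sub m₁ m₂) ⟨∅, .empty⟩)

lemma measureReal_sub_le_tvDist {A : Set Y} (hA : MeasurableSet A) :
    m₁.real A - m₂.real A ≤ tvDist m₁ m₂ :=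
  (le_abs_self _).trans (le_ciSup (bddAbove_range_abs_measureReal_sub m₁ m₂) ⟨A, hA⟩)

lemma J_sub_le_tvDist {r : Y → ℝ} (hr_meas : Measurable r) (hr : ∀ y, 0 ≤ r y ∧ r y ≤ 1) :
    J r m₁ - J r m₂ ≤ tvDist m₁ m₂ := by
  have layer_cake (m : Measure Y) [IsFiniteMeasure m] :
      J r m = ∫ t in Set.Ioc 0 1, m.real {y | t ≤ r y} := by
    refine Integrable.integral_eq_integral_Ioc_meas_le ?_ (.of_forall fun y => (hr y).1)
      (.of_forall fun y => (hr y).2)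
    refine .of_bound hr_meas.aestronglyMeasurable 1 (.of_forall fun y => ?_)
    rw [Real.norm_eq_abs, abs_le]
    exact ⟨by linarith [(hr y).1], (hr y).2⟩
  have integrableOn (m : Measure Y) [IsFiniteMeasure m] :
      IntegrableOn (fun t => m.real {y | t ≤ r y}) (Set.Ioc 0 1) := by
    have anti : Antitone fun t : ℝ => m.real {y | t ≤ r y} :=
      fun s t hst => measureReal_mono fun y (hy : t ≤ r y) => hst.trans hy
    exact (anti.intervalIntegrable (a := 0) (b := 1)).1
  rw [layer_cake, layer_cake, ← integral_sub (integrableOn m₁) (integrableOn m₂)]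
  calc ∫ t in Set.Ioc 0 1, (m₁.real {y | t ≤ r y} - m₂.real {y | t ≤ r y})
      ≤ ∫ _ in Set.Ioc (0 : ℝ) 1, tvDist m₁ m₂ :=
        setIntegral_mono_on ((integrableOn m₁).sub (integrableOn m₂))
          (integrableOn_const (by simp) (by simp)) measurableSet_Ioc
          fun t _ => measureReal_sub_le_tvDist m₁ m₂ (hr_meas measurableSet_Ici)
    _ = tvDist m₁ m₂ := by simp

end TotalVariation

section RegularizedStd

variable {Y : Type*} [MeasurableSpace Y] {r : Y → ℝ} {m : Measure Y} {ε : ℝ}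

lemma rvar_eq_variance (hr_meas : Measurable r) : rvar r m = ProbabilityTheory.variance r m :=
  (ProbabilityTheory.variance_eq_integral hr_meas.aemeasurable).symm

lemma rvar_le_one_fourth [IsProbabilityMeasure m] (hr_meas : Measurable r)
    (hr : ∀ y, 0 ≤ r y ∧ r y ≤ 1) : rvar r m ≤ 1 / 4 := by
  have popoviciu := ProbabilityTheory.variance_le_sq_of_bounded (μ := m) (a := 0) (b := 1)
    (.of_forall hr) hr_meas.aemeasurable
  rw [rvar_eq_variance hr_meas]
  linarith

lemma sigmaEps_pos (hε : 0 < ε) : 0 < sigmaEps r m ε :=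
  Real.sqrt_pos.2 (add_pos_of_nonneg_of_pos (integral_nonneg fun _ => sq_nonneg _) hε)

lemma sigmaEps_le_one (hvar : rvar r m ≤ 1 / 4) (hε : ε ≤ 3 / 4) : sigmaEps r m ε ≤ 1 :=
  Real.sqrt_le_one.2 (by linarith)

lemma Ladv_sub_eq (α π πk : Measure Y) (hσ : sigmaEps r α ε ≠ 0) :
    Ladv r α π ε - (J r π - J r πk) =
      (1 - sigmaEps r α ε) / sigmaEps r α ε * (J r π - J r α) + (J r πk - J r α) := by
  rw [Ladv]
  field_simp
  ring

end RegularizedStd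

/-- Upper bound on the gap between the off-policy GRPO objective and the true policy
improvement, equivalent form of the off-policy improvement lower bound. -/
theorem offpolicy_gap_upper_bound {Y : Type*} [MeasurableSpace Y]
    (r : Y → ℝ) (hr_meas : Measurable r) (hr : ∀ y, 0 ≤ r y ∧ r y ≤ 1)
    (ε : ℝ) (hε : 0 < ε) (hε' : ε ≤ 3 / 4)
    (π πk α : Measure Y)
    [IsProbabilityMeasure π] [IsProbabilityMeasure πk] [IsProbabilityMeasure α] :
    Ladv r α π ε - (J r π - J r πk) ≤
      2 * ((1 - sigmaEps r α ε) / sigmaEps r α ε) * tvDist π α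
        + 2 * tvDist πk α := by
  set σ := sigmaEps r α ε
  have hσ_pos : 0 < σ := sigmaEps_pos hε
  have hcoef : 0 ≤ (1 - σ) / σ :=
    div_nonneg (sub_nonneg.2 (sigmaEps_le_one (rvar_le_one_fourth hr_meas hr) hε')) hσ_pos.le
  calc Ladv r α π ε - (J r π - J r πk)
      = (1 - σ) / σ * (J r π - J r α) + (J r πk - J r α) := Ladv_sub_eq α π πk hσ_pos.ne'
    _ ≤ (1 - σ) / σ * tvDist π α + tvDist πk α :=
        add_le_add (mul_le_mul_of_nonneg_left (J_sub_le_tvDist π α hr_meas hr) hcoef)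
          (J_sub_le_tvDist πk α hr_meas hr)
    _ ≤ 2 * ((1 - σ) / σ) * tvDist π α + 2 * tvDist πk α := by
        nlinarith [mul_nonneg hcoef (tvDist_nonneg π α), tvDist_nonneg πk α]
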